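/- Let m be a positive integer and let x be a real number with 0 < x < 2π. Then ∑_{n=1}^∞ sin(nx)/n^{2m} = ((-1)^m (2π)^{2m-1}/(2m-1)!) · ( ζ'(1-2m, 1 - x/(2π)) − ζ'(1-2m, x/(2π)) ). -/

import Mathlib

/-
For `0 < a < 1` the difference `ζ(s, 1 - a) - ζ(s, a)` is `-2` times the odd Hurwitz zeta
function `Z(s)` of `a`, whose functional equation reads
`Z(1 - s) = 2 (2π)^(-s) Γ(s) sin(πs/2) S(s)`, where `S(s) = ∑ₙ sin(2πna)/n^s`.
At `s = 2m` the factor `sin(πs/2)` vanishes, so differentiating the functional equation there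
keeps only the term `(π/2) cos(πm) · 2 (2π)^(-2m) (2m-1)! S(2m)`; this expresses the series
`S(2m)`, evaluated at `a = x/(2π)`, through `Z'(1 - 2m)`.
-/

open Filter Topology Finset Real

/-- The Hurwitz zeta function `ζ(s, a)` for a real parameter `a > 0`: the meromorphic
continuation in `s` of the series `∑ k : ℕ, (k + a) ^ (-s)` (convergent for `Re s > 1`).
For `0 < a ≤ 1` it is Mathlib's `HurwitzZeta.hurwitzZeta`; for larger `a` it is obtained
through the recurrence `ζ(s, a) = ζ(s, a + 1) + a ^ (-s)`. -/
noncomputable def hzeta (s : ℂ) (a : ℝ) : ℂ :=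
  HurwitzZeta.hurwitzZeta (a : UnitAddCircle) s -
    ∑ j ∈ Finset.range (⌈a⌉₊ - 1), ((a : ℂ) - ((⌈a⌉₊ : ℂ) - 1) + j) ^ (-s)

open HurwitzZeta

lemma hzeta_eq_hurwitzZeta {b : ℝ} (hb0 : 0 < b) (hb1 : b ≤ 1) :
    (hzeta · b) = hurwitzZeta b := by
  have hceil : ⌈b⌉₊ = 1 :=
    (Nat.ceil_eq_iff one_ne_zero).mpr ⟨by simpa using hb0, by simpa using hb1⟩
  ext s
  simp [hzeta, hceil]

lemma hurwitzZeta_neg_sub_hurwitzZeta (a : UnitAddCircle) (s : ℂ) :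
    hurwitzZeta (-a) s - hurwitzZeta a s = -2 * hurwitzZetaOdd a s := by
  simp only [hurwitzZeta, hurwitzZetaEven_neg, hurwitzZetaOdd_neg]
  ring

lemma deriv_hurwitzZeta_neg_sub_deriv_hurwitzZeta (a : UnitAddCircle) {s : ℂ} (hs : s ≠ 1) :
    deriv (hurwitzZeta (-a)) s - deriv (hurwitzZeta a) s = -2 * deriv (hurwitzZetaOdd a) s := by
  rw [← deriv_sub (differentiableAt_hurwitzZeta _ hs) (differentiableAt_hurwitzZeta _ hs),
    ← deriv_const_mul _ (differentiable_hurwitzZetaOdd a s)]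
  exact congrArg (deriv · s) (funext (hurwitzZeta_neg_sub_hurwitzZeta a))

lemma HasDerivAt.mul_of_left_eq_zero {𝕜 : Type*} [NontriviallyNormedField 𝕜]
    {f g : 𝕜 → 𝕜} {f' t : 𝕜} (hf : HasDerivAt f f' t) (hg : DifferentiableAt 𝕜 g t)
    (hft : f t = 0) :
    HasDerivAt (fun s => f s * g s) (f' * g t) t := by
  simpa [hft] using hf.fun_mul hg.hasDerivAt

lemma Complex.cos_nat_mul_pi (n : ℕ) : Complex.cos (n * π) = (-1) ^ n := by
  simpa using congrArg ((↑) : ℝ → ℂ) (Real.cos_nat_mul_pi n)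

lemma hasSum_sin_mul_div_pow (x : ℝ) {k : ℕ} (hk : 1 < k) :
    HasSum (fun n : ℕ => (Real.sin ((n + 1) * x) : ℂ) / ((n : ℂ) + 1) ^ k)
      (sinZeta (x / (2 * π) : ℝ) k) := by
  have h := (hasSum_nat_add_iff' 1).mpr
    (hasSum_nat_sinZeta (x / (2 * π)) (s := k) (by simpa using hk))
  simp only [Finset.range_one, Finset.sum_singleton, CharP.cast_eq_zero, mul_zero, Real.sin_zero,
    Complex.ofReal_zero, zero_div, sub_zero] at h
  refine h.congr_fun fun n => ?_
  have harg : 2 * π * (x / (2 * π)) * (n + 1 : ℕ) = (n + 1) * x := by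
    push_cast
    field_simp
  rw [harg, Complex.cpow_natCast]
  push_cast
  rfl

lemma deriv_hurwitzZetaOdd_one_sub_two_mul (a : UnitAddCircle) {m : ℕ} (hm : 0 < m) :
    deriv (hurwitzZetaOdd a) (1 - 2 * m) =
      -((-1) ^ m * (π / 2) * (2 * (2 * π) ^ (-(2 * m : ℂ)) * Complex.Gamma (2 * m) *
        sinZeta a (2 * m))) := by
  set t : ℂ := 2 * m
  set G : ℂ → ℂ := fun s => 2 * (2 * π) ^ (-s) * Complex.Gamma s * sinZeta a s
  have hnot_neg_nat : ∀ s : ℂ, 0 < s.re → ∀ n : ℕ, s ≠ -n := fun s hs n h => by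
    subst h
    simp only [Complex.neg_re, Complex.natCast_re, Left.neg_pos_iff] at hs
    exact (Nat.cast_nonneg n).not_gt hs
  have ht : 0 < t.re := by simpa [t] using hm
  have hfe : (fun s => hurwitzZetaOdd a (1 - s)) =ᶠ[𝓝 t]
      fun s => Complex.sin (π * s / 2) * G s := by
    filter_upwards [(Complex.continuous_re.tendsto t).eventually (lt_mem_nhds ht)] with s hs
    rw [hurwitzZetaOdd_one_sub a (hnot_neg_nat s hs)]
    ring
  have hG : DifferentiableAt ℂ G t :=
    (((differentiableAt_id.neg.const_cpow (Or.inl (by simp [Real.pi_ne_zero]))).const_mul 2).mul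
      (Complex.differentiableAt_Gamma t (hnot_neg_nat t ht))).mul (differentiableAt_sinZeta a t)
  have hsin : HasDerivAt (fun s : ℂ => Complex.sin (π * s / 2))
      (Complex.cos (π * t / 2) * (π / 2)) t :=
    (((hasDerivAt_id' t).const_mul (π : ℂ)).div_const 2).csin.congr_deriv (by ring)
  have harg : (π : ℂ) * t / 2 = m * π := by ring
  have hsin_zero : Complex.sin (π * t / 2) = 0 := by rw [harg, Complex.sin_nat_mul_pi]
  have hrhs := (hsin.mul_of_left_eq_zero hG hsin_zero).congr_of_eventuallyEq hfe
  have hlhs : HasDerivAt (fun s => hurwitzZetaOdd a (1 - s))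
      (-deriv (hurwitzZetaOdd a) (1 - t)) t :=
    (differentiable_hurwitzZetaOdd a (1 - t)).hasDerivAt.comp_const_sub 1 t
  rw [← neg_eq_iff_eq_neg, hlhs.unique hrhs, harg, Complex.cos_nat_mul_pi]

lemma sinZeta_two_mul_eq_deriv_hurwitzZetaOdd (a : UnitAddCircle) {m : ℕ} (hm : 0 < m) :
    sinZeta a (2 * m) = (-1) ^ m * (2 * π) ^ (2 * m - 1) / (Nat.factorial (2 * m - 1) : ℂ) *
      (-2 * deriv (hurwitzZetaOdd a) (1 - 2 * m)) := by
  have h2m : (2 * m : ℂ) = ((2 * m - 1 : ℕ) : ℂ) + 1 := by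
    rw [Nat.cast_sub (by omega)]
    push_cast
    ring
  have hsign : (-1 : ℂ) ^ m * (-1) ^ m = 1 := by
    rw [← mul_pow]
    simp
  have hfac : (Nat.factorial (2 * m - 1) : ℂ) ≠ 0 := mod_cast (2 * m - 1).factorial_ne_zero
  rw [deriv_hurwitzZetaOdd_one_sub_two_mul a hm]
  set S := sinZeta a (2 * m)
  rw [h2m, Complex.Gamma_nat_eq_factorial, ← Nat.cast_succ, Complex.cpow_neg,
    Complex.cpow_natCast, pow_succ]
  field_simp
  linear_combination -S * hsign

theorem sin_series_even_exponent_closed_form (m : ℕ) (hm : 0 < m)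
    (x : ℝ) (hx0 : 0 < x) (hx1 : x < 2 * π) :
    Filter.Tendsto
      (fun N : ℕ => ∑ n ∈ Finset.range N,
        (Real.sin ((n + 1) * x) : ℂ) / ((n : ℂ) + 1) ^ (2 * m))
      Filter.atTop
      (𝓝 ((-1) ^ m * (2 * (π : ℂ)) ^ (2 * m - 1) / (Nat.factorial (2 * m - 1) : ℂ) *
        (deriv (fun s => hzeta s (1 - x / (2 * π))) (1 - 2 * (m : ℂ)) -
          deriv (fun s => hzeta s (x / (2 * π))) (1 - 2 * (m : ℂ))))) := by
  set a : ℝ := x / (2 * π)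
  have ha0 : 0 < a := by positivity
  have ha1 : a < 1 := (div_lt_one (by positivity)).mpr hx1
  have hreflect : ((1 - a : ℝ) : UnitAddCircle) = -(a : UnitAddCircle) := by
    rw [AddCircle.coe_sub, AddCircle.coe_period, zero_sub]
  have hs : (1 - 2 * m : ℂ) ≠ 1 := by
    simpa using hm.ne'
  rw [hzeta_eq_hurwitzZeta (by linarith) (by linarith), hzeta_eq_hurwitzZeta ha0 ha1.le, hreflect,
    deriv_hurwitzZeta_neg_sub_deriv_hurwitzZeta _ hs,
    ← sinZeta_two_mul_eq_deriv_hurwitzZetaOdd _ hm]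
  have hsum := hasSum_sin_mul_div_pow x (k := 2 * m) (by omega)
  rw [Nat.cast_mul, Nat.cast_ofNat] at hsum
  exact hsum.tendsto_sum_nat
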